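/- Let s_λ denote Schur polynomials in n variables and let R(ℓ,m) denote the rectangular partition with ℓ rows each of length m (for ℓ ≤ n). Then s_{R(ℓ,m)}² = s_{R(ℓ,m−1)} s_{R(ℓ,m+1)} + s_{R(ℓ−1,m)} s_{R(ℓ+1,m)} for all ℓ with 1 ≤ ℓ ≤ n−1 and m ≥ 1, where s of the empty partition is 1. -/
import Mathlib

open Matrix

/-- `h_k` for `k ∈ ℤ`: the complete homogeneous symmetric polynomial in `n` variables,
zero for negative degree. -/
noncomputable def hInt (n : ℕ) (k : ℤ) : MvPolynomial (Fin n) ℤ :=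
  if 0 ≤ k then MvPolynomial.hsymm (Fin n) ℤ k.toNat else 0

/-- The Schur polynomial in `n` variables of the rectangular partition `R(ℓ,m)`
(`ℓ` rows of length `m`), via the Jacobi–Trudi formula
`s_{R(ℓ,m)} = det (h_{m+j-i})_{1 ≤ i,j ≤ ℓ}`.  For `ℓ = 0` (empty partition) it is `1`. -/
noncomputable def schurRect (n ℓ m : ℕ) : MvPolynomial (Fin n) ℤ :=
  Matrix.det (fun i j : Fin ℓ => hInt n ((m : ℤ) + (j : ℤ) - (i : ℤ)))


private lemma neg_one_pow_double {R : Type*} [CommRing R] (k : ℕ) : ((-1 : R)) ^ (k + k) = 1 :=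
  Even.neg_one_pow ⟨k, rfl⟩

/-- Determinant of a matrix whose first column is `s•e₀` and last column is `t•e_last`. -/
private lemma det_expand_ends {R : Type*} [CommRing R] (n : ℕ)
    (A : Matrix (Fin (n + 2)) (Fin (n + 2)) R) (s t : R)
    (h0 : ∀ i, A i 0 = if i = 0 then s else 0)
    (hl : ∀ i, A i (Fin.last (n + 1)) = if i = Fin.last (n + 1) then t else 0) :
    A.det = s * t *
      (A.submatrix (fun i : Fin n => i.castSucc.succ) (fun j : Fin n => j.castSucc.succ)).det := by
  rw [det_succ_column_zero, Finset.sum_eq_single 0]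
  · rw [h0 0, if_pos rfl]
    simp only [Fin.val_zero, pow_zero, one_mul, Fin.succAbove_zero]
    rw [det_succ_column (A.submatrix Fin.succ Fin.succ) (Fin.last n),
      Finset.sum_eq_single (Fin.last n)]
    · rw [submatrix_apply, Fin.succ_last, hl, if_pos rfl]
      simp only [Fin.val_last, Fin.succAbove_last, submatrix_submatrix]
      rw [neg_one_pow_double]
      ring_nf
      rfl
    · intro b _ hb
      rw [submatrix_apply, Fin.succ_last, hl,
        if_neg (fun h => hb (by rwa [← Fin.succ_last, Fin.succ_inj] at h))]
      ring
    · intro h; exact absurd (Finset.mem_univ _) h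
  · intro b _ hb
    rw [h0 b, if_neg hb]; ring
  · intro h; exact absurd (Finset.mem_univ _) h

/-- Determinant of a matrix which agrees with the identity except in the first
and last columns. -/
private lemma det_mid_id {R : Type*} [CommRing R] :
    ∀ (n : ℕ) (A : Matrix (Fin (n + 2)) (Fin (n + 2)) R) (c d : Fin (n + 2) → R),
    (∀ i, A i 0 = c i) → (∀ i, A i (Fin.last (n + 1)) = d i) →
    (∀ i j, j ≠ 0 → j ≠ Fin.last (n + 1) → A i j = if i = j then 1 else 0) →
    A.det = c 0 * d (Fin.last (n + 1)) - c (Fin.last (n + 1)) * d 0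
  | 0, A, c, d, h0, hl, _ => by
    have ha : A 1 1 = d 1 := hl 1
    have hb : A 0 1 = d 0 := hl 0
    show A.det = c 0 * d 1 - c 1 * d 0
    rw [det_fin_two, h0 0, h0 1, ha, hb]
    try ring
  | (n + 1), A, c, d, h0, hl, hm => by
    have h1ne0 : (1 : Fin (n + 3)) ≠ 0 := by
      simp [Fin.ext_iff]
    have h1nelast : (1 : Fin (n + 3)) ≠ Fin.last (n + 2) := by
      simp [Fin.ext_iff]; try omega
    have hsA0 : (1 : Fin (n + 3)).succAbove 0 = 0 := by
      rw [Fin.succAbove_of_castSucc_lt]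
      · rfl
      · simp [Fin.lt_def]
    have hsAl : (1 : Fin (n + 3)).succAbove (Fin.last (n + 1)) = Fin.last (n + 2) := by
      rw [Fin.succAbove_of_le_castSucc, Fin.succ_last]
      simp [Fin.le_def]
    have hinj : Function.Injective (1 : Fin (n + 3)).succAbove :=
      Fin.succAbove_right_injective
    rw [det_succ_column A 1, Finset.sum_eq_single 1]
    · rw [hm 1 1 h1ne0 h1nelast, if_pos rfl]
      have hmid' : ∀ (i j : Fin (n + 2)), j ≠ 0 → j ≠ Fin.last (n + 1) →
          (A.submatrix (1 : Fin (n + 3)).succAbove (1 : Fin (n + 3)).succAbove) i j =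
            if i = j then 1 else 0 := by
        intro i j hj0 hjl
        rw [submatrix_apply, hm]
        · by_cases h : i = j
          · simp [h]
          · rw [if_neg (fun hh => h (hinj hh)), if_neg h]
        · exact fun h => hj0 (hinj (h.trans hsA0.symm))
        · exact fun h => hjl (hinj (h.trans hsAl.symm))
      have := det_mid_id n (A.submatrix (1 : Fin (n + 3)).succAbove (1 : Fin (n + 3)).succAbove)
        (c ∘ (1 : Fin (n + 3)).succAbove) (d ∘ (1 : Fin (n + 3)).succAbove)
        (fun i => by rw [submatrix_apply, hsA0, h0]; rfl)
        (fun i => by rw [submatrix_apply, hsAl, hl]; rfl)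
        hmid'
      rw [this]
      simp only [Function.comp_apply, hsA0, hsAl, Fin.val_one]
      norm_num
    · intro b _ hb
      rw [hm b 1 h1ne0 h1nelast, if_neg hb]; ring
    · intro h; exact absurd (Finset.mem_univ _) h

private lemma dodgson_domain {S : Type*} [CommRing S] [IsDomain S] (n : ℕ)
    (X : Matrix (Fin (n + 2)) (Fin (n + 2)) S) (hdetX : X.det ≠ 0) :
    X.det * (X.submatrix (fun i : Fin n => i.castSucc.succ) (fun j : Fin n => j.castSucc.succ)).det
      = (X.submatrix Fin.castSucc Fin.castSucc).det * (X.submatrix Fin.succ Fin.succ).det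
        - (X.submatrix Fin.succ Fin.castSucc).det * (X.submatrix Fin.castSucc Fin.succ).det := by
  set c : Fin (n + 2) → S := fun i => adjugate X i 0 with hc
  set d : Fin (n + 2) → S := fun i => adjugate X i (Fin.last (n + 1)) with hd
  set B : Matrix (Fin (n + 2)) (Fin (n + 2)) S := of fun i j =>
    if j = 0 then c i else if j = Fin.last (n + 1) then d i else if i = j then 1 else 0 with hB
  -- columns of X * B
  have hXB0 : ∀ i, (X * B) i 0 = if i = 0 then X.det else 0 := by
    intro i
    have : (X * B) i 0 = (X * adjugate X) i 0 := by
      rw [mul_apply, mul_apply]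
      exact Finset.sum_congr rfl fun k _ => by simp [hB, hc]
    rw [this, mul_adjugate]
    simp [Matrix.one_apply]
  have hXBl : ∀ i, (X * B) i (Fin.last (n + 1)) =
      if i = Fin.last (n + 1) then X.det else 0 := by
    intro i
    have hlne : (Fin.last (n + 1) : Fin (n + 2)) ≠ 0 := by
      simp [Fin.ext_iff]
    have : (X * B) i (Fin.last (n + 1)) = (X * adjugate X) i (Fin.last (n + 1)) := by
      rw [mul_apply, mul_apply]
      exact Finset.sum_congr rfl fun k _ => by simp [hB, hd, if_neg hlne]
    rw [this, mul_adjugate]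
    simp [Matrix.one_apply]
  have hXBmid : ∀ i j, j ≠ 0 → j ≠ Fin.last (n + 1) → (X * B) i j = X i j := by
    intro i j hj0 hjl
    rw [mul_apply]
    have : ∀ k, X i k * B k j = if k = j then X i k else 0 := by
      intro k
      simp only [hB, of_apply, if_neg hj0, if_neg hjl]
      by_cases h : k = j <;> simp [h]
    simp only [this]
    simp
  -- two evaluations of det (X * B)
  have hmidne : ∀ j : Fin n, (j.castSucc.succ : Fin (n + 2)) ≠ 0 ∧
      (j.castSucc.succ : Fin (n + 2)) ≠ Fin.last (n + 1) := by
    intro j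
    constructor
    · exact Fin.succ_ne_zero _
    · intro h
      rw [← Fin.succ_last, Fin.succ_inj] at h
      exact absurd h (Fin.ne_of_lt (Fin.castSucc_lt_last j))
  have hsub : (X * B).submatrix (fun i : Fin n => i.castSucc.succ)
      (fun j : Fin n => j.castSucc.succ) =
      X.submatrix (fun i : Fin n => i.castSucc.succ) (fun j : Fin n => j.castSucc.succ) := by
    ext i j
    rw [submatrix_apply, submatrix_apply, hXBmid _ _ (hmidne j).1 (hmidne j).2]
  have e1 : (X * B).det = X.det * X.det *
      (X.submatrix (fun i : Fin n => i.castSucc.succ) (fun j : Fin n => j.castSucc.succ)).det := by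
    rw [det_expand_ends n (X * B) X.det X.det hXB0 hXBl, hsub]
  have e2 : (X * B).det = X.det * (c 0 * d (Fin.last (n + 1)) - c (Fin.last (n + 1)) * d 0) := by
    rw [det_mul, det_mid_id n B c d (fun i => by simp [hB]) (fun i => by
        have hlne : (Fin.last (n + 1) : Fin (n + 2)) ≠ 0 := by simp [Fin.ext_iff]
        simp [hB, if_neg hlne])
      (fun i j hj0 hjl => by simp [hB, if_neg hj0, if_neg hjl])]
  have key : X.det *
      (X.submatrix (fun i : Fin n => i.castSucc.succ) (fun j : Fin n => j.castSucc.succ)).det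
      = c 0 * d (Fin.last (n + 1)) - c (Fin.last (n + 1)) * d 0 := by
    apply mul_left_cancel₀ hdetX
    rw [← mul_assoc, ← e1, e2]
  rw [key]
  -- identify the cofactors
  have hc0 : c 0 = (X.submatrix Fin.succ Fin.succ).det := by
    show X.adjugate 0 0 = _
    rw [adjugate_fin_succ_eq_det_submatrix]
    simp
  have hdl : d (Fin.last (n + 1)) = (X.submatrix Fin.castSucc Fin.castSucc).det := by
    show X.adjugate (Fin.last (n + 1)) (Fin.last (n + 1)) = _
    rw [adjugate_fin_succ_eq_det_submatrix]
    simp [Fin.val_last, neg_one_pow_double]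
  have hcl : c (Fin.last (n + 1)) = (-1 : S) ^ (n + 1) * (X.submatrix Fin.succ Fin.castSucc).det := by
    show X.adjugate (Fin.last (n + 1)) 0 = _
    rw [adjugate_fin_succ_eq_det_submatrix]
    simp
  have hd0 : d 0 = (-1 : S) ^ (n + 1) * (X.submatrix Fin.castSucc Fin.succ).det := by
    show X.adjugate 0 (Fin.last (n + 1)) = _
    rw [adjugate_fin_succ_eq_det_submatrix]
    simp
  rw [hc0, hdl, hcl, hd0]
  have hsq : ((-1 : S) ^ (n + 1)) * ((-1 : S) ^ (n + 1)) = 1 := by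
    rw [← pow_add]; exact neg_one_pow_double (n + 1)
  linear_combination (-(X.submatrix Fin.succ Fin.castSucc).det *
    (X.submatrix Fin.castSucc Fin.succ).det) * hsq

private lemma dodgson {R : Type*} [CommRing R] (n : ℕ)
    (M : Matrix (Fin (n + 2)) (Fin (n + 2)) R) :
    M.det * (M.submatrix (fun i : Fin n => i.castSucc.succ) (fun j : Fin n => j.castSucc.succ)).det
      = (M.submatrix Fin.castSucc Fin.castSucc).det * (M.submatrix Fin.succ Fin.succ).det
        - (M.submatrix Fin.succ Fin.castSucc).det * (M.submatrix Fin.castSucc Fin.succ).det := by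
  set f : MvPolynomial (Fin (n + 2) × Fin (n + 2)) ℤ →+* R :=
    (MvPolynomial.eval₂Hom (Int.castRingHom R) (fun p => M p.1 p.2)) with hf
  set X : Matrix (Fin (n + 2)) (Fin (n + 2)) (MvPolynomial (Fin (n + 2) × Fin (n + 2)) ℤ) :=
    of fun i j => MvPolynomial.X (i, j) with hX
  have hdetX : X.det ≠ 0 := by
    intro h
    have h2 := congrArg (MvPolynomial.eval₂Hom (RingHom.id ℤ)
      (fun p : Fin (n + 2) × Fin (n + 2) => if p.1 = p.2 then (1 : ℤ) else 0)) h
    rw [RingHom.map_det, map_zero] at h2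
    have h3 : ((MvPolynomial.eval₂Hom (RingHom.id ℤ)
        (fun p : Fin (n + 2) × Fin (n + 2) => if p.1 = p.2 then (1 : ℤ) else 0)).mapMatrix X)
        = (1 : Matrix (Fin (n + 2)) (Fin (n + 2)) ℤ) := by
      ext i j
      simp [hX, Matrix.one_apply, RingHom.mapMatrix_apply]
    rw [h3, det_one] at h2
    exact one_ne_zero h2
  have key := dodgson_domain n X hdetX
  have hmap : ∀ (r : ℕ) (ri ci : Fin r → Fin (n + 2)),
      f.mapMatrix (X.submatrix ri ci) = M.submatrix ri ci := by
    intro r ri ci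
    ext i j
    simp [hX, RingHom.mapMatrix_apply, hf]
  have hmapX : f.mapMatrix X = M := by
    ext i j
    simp [hX, RingHom.mapMatrix_apply, hf]
  have h2 := congrArg f key
  simp only [_root_.map_mul, map_sub, RingHom.map_det] at h2
  rw [hmapX, hmap, hmap, hmap, hmap, hmap] at h2
  exact h2

theorem stmt2 (n ℓ m : ℕ) (hℓ1 : 1 ≤ ℓ) (hℓ2 : ℓ ≤ n - 1) (hm : 1 ≤ m) :
    schurRect n ℓ m ^ 2 =
      schurRect n ℓ (m - 1) * schurRect n ℓ (m + 1) +
        schurRect n (ℓ - 1) m * schurRect n (ℓ + 1) m := by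
  obtain ⟨k, rfl⟩ : ∃ k, ℓ = k + 1 := ⟨ℓ - 1, by omega⟩
  set M : Matrix (Fin (k + 2)) (Fin (k + 2)) (MvPolynomial (Fin n) ℤ) :=
    of fun i j => hInt n ((m : ℤ) + (j : ℤ) - (i : ℤ)) with hM
  have harg : ∀ a b : ℤ, a = b → hInt n a = hInt n b := fun a b h => by rw [h]
  have key := dodgson k M
  have h1 : M.det = schurRect n (k + 2) m := rfl
  have h2 : (M.submatrix (fun i : Fin k => i.castSucc.succ)
      (fun j : Fin k => j.castSucc.succ)).det = schurRect n k m := by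
    unfold schurRect
    congr 1
    all_goals
      refine Matrix.ext fun i j => ?_
      simp only [hM, submatrix_apply, of_apply]
      apply harg
      simp only [Fin.val_succ, Fin.coe_castSucc]
      try push_cast
      try ring
  have h3 : (M.submatrix Fin.castSucc Fin.castSucc).det = schurRect n (k + 1) m := by
    unfold schurRect
    congr 1
    all_goals
      refine Matrix.ext fun i j => ?_
      simp only [hM, submatrix_apply, of_apply]
      apply harg
      simp only [Fin.val_succ, Fin.coe_castSucc]
      try push_cast
      try ring
  have h4 : (M.submatrix Fin.succ Fin.succ).det = schurRect n (k + 1) m := by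
    unfold schurRect
    congr 1
    all_goals
      refine Matrix.ext fun i j => ?_
      simp only [hM, submatrix_apply, of_apply]
      apply harg
      simp only [Fin.val_succ, Fin.coe_castSucc]
      try push_cast
      try ring
  have h5 : (M.submatrix Fin.succ Fin.castSucc).det = schurRect n (k + 1) (m - 1) := by
    unfold schurRect
    congr 1
    refine Matrix.ext fun i j => ?_
    simp only [hM, submatrix_apply, of_apply]
    apply harg
    have : ((m - 1 : ℕ) : ℤ) = (m : ℤ) - 1 := by omega
    rw [this]
    simp only [Fin.val_succ, Fin.coe_castSucc]
    try push_cast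
    try ring
  have h6 : (M.submatrix Fin.castSucc Fin.succ).det = schurRect n (k + 1) (m + 1) := by
    unfold schurRect
    congr 1
    all_goals
      refine Matrix.ext fun i j => ?_
      simp only [hM, submatrix_apply, of_apply]
      apply harg
      simp only [Fin.val_succ, Fin.coe_castSucc]
      try push_cast
      try ring
  rw [h1, h2, h3, h4, h5, h6] at key
  have hsub1 : k + 1 - 1 = k := by omega
  rw [hsub1]
  linear_combination -key
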